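/- arXiv:1907.01681 — 3 statements merged into one kernel-verified Lean document; each statement's English description precedes it below -/
import Mathlib

section
/- Let K be an irreducible, row-stochastic, row-reversible kernel with stationary distribution π (π_i K_{ij} = π_j K_{ji}), and let Q(t) solve Q' = (K - I)Q. For a differentiable convex φ : ℝ⁺ → ℝ, define G_φ(Q|π) = Σ_i φ(Q_i) π_i. Then d/dt G_φ(Q(t)|π) = -(1/2) Σ_{i,j} K_{ij} β(Q_i, Q_j)(φ'(Q_j) - φ'(Q_i))(log Q_j - log Q_i) π_i ≤ 0, where β(x,y) = (x-y)/(log x - log y) is the logarithmic mean (with β(x,x)=x). -/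
/-!
Since `β(x, y) (log y - log x) = y - x`, the claimed rate is
`-(1/2) Σᵢⱼ πᵢ Kᵢⱼ (Qⱼ - Qᵢ)(φ'(Qⱼ) - φ'(Qᵢ))`. Reversibility lets one swap `i` and `j` in this
Dirichlet form, which turns it into `Σᵢ πᵢ φ'(Qᵢ) ((K - I)Q)ᵢ`, the derivative of `Σᵢ φ(Qᵢ) πᵢ`
by the chain rule. Each summand of the Dirichlet form is nonnegative because `φ'` is monotone.
-/

open Matrix
/-- The logarithmic mean `β(x,y) = (x-y)/(log x - log y)`, with `β(x,x) = x`. -/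
noncomputable def logMean (x y : ℝ) : ℝ :=
  if x = y then x else (x - y) / (Real.log x - Real.log y)

lemma logMean_mul_log_sub_log {x y : ℝ} (hx : 0 < x) (hy : 0 < y) :
    logMean x y * (Real.log y - Real.log x) = y - x := by
  unfold logMean
  split_ifs with h
  · simp [h]
  · have hlog : Real.log x - Real.log y ≠ 0 := sub_ne_zero.2 fun he =>
      h (Real.log_injOn_pos (Set.mem_Ioi.2 hx) (Set.mem_Ioi.2 hy) he)
    field_simp
    ring

lemma ConvexOn.monotoneOn_of_hasDerivAt {S : Set ℝ} {f f' : ℝ → ℝ} (hfc : ConvexOn ℝ S f)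
    (hf' : ∀ x ∈ S, HasDerivAt f (f' x) x) : MonotoneOn f' S :=
  (hfc.monotoneOn_deriv fun x hx => (hf' x hx).differentiableAt).congr fun x hx =>
    (hf' x hx).deriv

lemma MonotoneOn.sub_mul_sub_nonneg {S : Set ℝ} {g : ℝ → ℝ} (hg : MonotoneOn g S) {x y : ℝ}
    (hx : x ∈ S) (hy : y ∈ S) : 0 ≤ (y - x) * (g y - g x) := by
  rcases le_total x y with h | h
  · exact mul_nonneg (sub_nonneg.2 h) (sub_nonneg.2 (hg hx hy h))
  · exact mul_nonneg_of_nonpos_of_nonpos (sub_nonpos.2 h) (sub_nonpos.2 (hg hy hx h))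

lemma sum_sum_mul_sub_mul_sub_of_reversible {ι : Type*} [Fintype ι] (K : Matrix ι ι ℝ)
    (π : ι → ℝ) (hKrow : ∀ i, ∑ j, K i j = 1) (hrev : ∀ i j, π i * K i j = π j * K j i)
    (f g : ι → ℝ) :
    ∑ i, ∑ j, K i j * (f j - f i) * (g j - g i) * π i
      = -2 * ∑ i, g i * (K *ᵥ f - f) i * π i := by
  have hswap : ∑ i, ∑ j, K i j * (f j - f i) * g j * π i
      = -∑ i, ∑ j, K i j * (f j - f i) * g i * π i := by
    rw [Finset.sum_comm, ← Finset.sum_neg_distrib]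
    refine Finset.sum_congr rfl fun j _ => ?_
    rw [← Finset.sum_neg_distrib]
    refine Finset.sum_congr rfl fun i _ => ?_
    linear_combination (f j - f i) * g j * hrev i j
  have hgen : ∀ i, ∑ j, K i j * (f j - f i) = (K *ᵥ f - f) i := fun i => by
    simp only [mul_sub, Finset.sum_sub_distrib, ← Finset.sum_mul, hKrow i, one_mul,
      Pi.sub_apply, mulVec, dotProduct]
  calc ∑ i, ∑ j, K i j * (f j - f i) * (g j - g i) * π i
      = ∑ i, ∑ j, K i j * (f j - f i) * g j * π i
          - ∑ i, ∑ j, K i j * (f j - f i) * g i * π i := by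
        simp only [← Finset.sum_sub_distrib]
        exact Finset.sum_congr rfl fun i _ => Finset.sum_congr rfl fun j _ => by ring
    _ = -2 * ∑ i, (∑ j, K i j * (f j - f i)) * g i * π i := by
        simp only [hswap, Finset.sum_mul]
        ring
    _ = -2 * ∑ i, g i * (K *ᵥ f - f) i * π i := by
        simp only [hgen, mul_comm (g _)]

theorem stmt7_general {n : ℕ}
    (K : Matrix (Fin n) (Fin n) ℝ) (π : Fin n → ℝ)
    (hπ : ∀ i, 0 < π i)
    (hKnonneg : ∀ i j, 0 ≤ K i j)
    (hKrow : ∀ i, ∑ j, K i j = 1)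
    (hrev : ∀ i j, π i * K i j = π j * K j i)
    -- `Q(t)` is an everywhere-positive density solving `Q' = (K - I) Q`
    (Q : ℝ → Fin n → ℝ)
    (hQpos : ∀ t i, 0 < Q t i)
    (hQ : ∀ t : ℝ, HasDerivAt Q (K *ᵥ Q t - Q t) t)
    -- `φ` is convex on `ℝ⁺` and differentiable with derivative `φ'`
    (φ φ' : ℝ → ℝ)
    (hφconv : ConvexOn ℝ (Set.Ici 0) φ)
    (hφ' : ∀ x : ℝ, 0 < x → HasDerivAt φ (φ' x) x) :
    ∀ t : ℝ,
      HasDerivAt (fun s => ∑ i, φ (Q s i) * π i)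
        (-(1 / 2) * ∑ i, ∑ j, K i j * logMean (Q t i) (Q t j) *
          (φ' (Q t j) - φ' (Q t i)) * (Real.log (Q t j) - Real.log (Q t i)) * π i) t ∧
      (-(1 / 2) * ∑ i, ∑ j, K i j * logMean (Q t i) (Q t j) *
          (φ' (Q t j) - φ' (Q t i)) * (Real.log (Q t j) - Real.log (Q t i)) * π i) ≤ 0 := by
  intro t
  have hdirichlet : ∑ i, ∑ j, K i j * logMean (Q t i) (Q t j) *
      (φ' (Q t j) - φ' (Q t i)) * (Real.log (Q t j) - Real.log (Q t i)) * π i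
      = ∑ i, ∑ j, K i j * (Q t j - Q t i) * (φ' (Q t j) - φ' (Q t i)) * π i :=
    Finset.sum_congr rfl fun i _ => Finset.sum_congr rfl fun j _ => by
      rw [← logMean_mul_log_sub_log (hQpos t i) (hQpos t j)]
      ring
  have hφ'mono : MonotoneOn φ' (Set.Ioi 0) :=
    (hφconv.subset Set.Ioi_subset_Ici_self (convex_Ioi 0)).monotoneOn_of_hasDerivAt hφ'
  rw [hdirichlet]
  constructor
  · have hsymm : ∑ i, ∑ j, K i j * (Q t j - Q t i) * (φ' (Q t j) - φ' (Q t i)) * π i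
        = -2 * ∑ i, φ' (Q t i) * (K *ᵥ Q t - Q t) i * π i :=
      sum_sum_mul_sub_mul_sub_of_reversible K π hKrow hrev (Q t) fun i => φ' (Q t i)
    have hchain := HasDerivAt.fun_sum (u := Finset.univ) fun i _ =>
      ((hφ' (Q t i) (hQpos t i)).comp t (hasDerivAt_pi.mp (hQ t) i)).mul_const (π i)
    rwa [hsymm, ← mul_assoc, show -(1 / 2 : ℝ) * -2 = 1 by norm_num, one_mul]
  · refine mul_nonpos_of_nonpos_of_nonneg (by norm_num) <|
      Finset.sum_nonneg fun i _ => Finset.sum_nonneg fun j _ => ?_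
    have hsign := hφ'mono.sub_mul_sub_nonneg (hQpos t i) (hQpos t j)
    rw [mul_assoc (K i j)]
    exact mul_nonneg (mul_nonneg (hKnonneg i j) hsign) (hπ i).le

theorem stmt7 {n : ℕ}
    (K : Matrix (Fin n) (Fin n) ℝ) (π : Fin n → ℝ)
    (hπ : ∀ i, 0 < π i) (hπ1 : ∑ i, π i = 1)
    (hKnonneg : ∀ i j, 0 ≤ K i j)
    (hKirr : ∀ i j, ∃ m : ℕ, 0 < (K ^ m) i j)
    (hKrow : ∀ i, ∑ j, K i j = 1)
    (hrev : ∀ i j, π i * K i j = π j * K j i)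
    -- `Q(t)` is an everywhere-positive density solving `Q' = (K - I) Q`
    (Q : ℝ → Fin n → ℝ)
    (hQpos : ∀ t i, 0 < Q t i)
    (hQmass : ∀ t, ∑ i, Q t i * π i = 1)
    (hQ : ∀ t : ℝ, HasDerivAt Q (K *ᵥ Q t - Q t) t)
    -- `φ` is convex on `ℝ⁺` and differentiable with derivative `φ'`
    (φ φ' : ℝ → ℝ)
    (hφconv : ConvexOn ℝ (Set.Ici 0) φ)
    (hφ' : ∀ x : ℝ, 0 < x → HasDerivAt φ (φ' x) x) :
    ∀ t : ℝ,
      HasDerivAt (fun s => ∑ i, φ (Q s i) * π i)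
        (-(1 / 2) * ∑ i, ∑ j, K i j * logMean (Q t i) (Q t j) *
          (φ' (Q t j) - φ' (Q t i)) * (Real.log (Q t j) - Real.log (Q t i)) * π i) t ∧
      (-(1 / 2) * ∑ i, ∑ j, K i j * logMean (Q t i) (Q t j) *
          (φ' (Q t j) - φ' (Q t i)) * (Real.log (Q t j) - Real.log (Q t i)) * π i) ≤ 0 :=
  stmt7_general K π hπ hKnonneg hKrow hrev Q hQpos hQ φ φ' hφconv hφ'
end

section
/- Let M ∈ A_{N+1,k} be admissible and micro-reversible with characteristic triple (μ, w̃, z̃), π̄ = (w̃ ∘ z̃, 0) extended by zeros on the absorbing states, φ : ℝ⁺ → ℝ convex, and G_φ(p|π̄) = Σ_{i=0}^{N-k} φ(p̃_i / (z̃_i ⟨w̃, p̃⟩)) w̃_i z̃_i when ⟨w̃,p̃⟩ ≠ 0 (+∞ otherwise). Then for all sufficiently small h > 0 (depending only on M) and every probability vector p, the one-step monotonicity G_φ(M^{(h)} p | π̄) ≤ G_φ(p | π̄) holds, where M^{(h)} = I + h(M - I). -/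
open Matrix

/-- Irreducibility of a nonnegative matrix: any state communicates with any other. -/
def MatIrred {n : ℕ} (A : Matrix (Fin n) (Fin n) ℝ) : Prop :=
  ∀ i j, ∃ m : ℕ, 0 < (A ^ m) i j

/-- The generalised (substochastic) relative entropy
`G_φ(p|π̄) = Σ_i φ(p̃_i/(z̃_i ⟨w̃,p̃⟩)) w̃_i z̃_i` if `⟨w̃,p̃⟩ ≠ 0`, and `+∞` otherwise. -/
noncomputable def Gent {n k : ℕ} (φ : ℝ → ℝ) (w z : Fin n → ℝ)
    (p : Fin n ⊕ Fin k → ℝ) : EReal :=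
  if (∑ i, w i * p (Sum.inl i)) ≠ 0 then
    ((∑ i, φ (p (Sum.inl i) / (z i * ∑ j, w j * p (Sum.inl j))) * (w i * z i) : ℝ) : EReal)
  else ⊤

theorem stmt11 (n k : ℕ)
    (Mt : Matrix (Fin n) (Fin n) ℝ) (A : Matrix (Fin k) (Fin n) ℝ)
    (M : Matrix (Fin n ⊕ Fin k) (Fin n ⊕ Fin k) ℝ)
    (hM : M = Matrix.fromBlocks Mt 0 A 1)
    (hnonneg : ∀ i j, 0 ≤ M i j)
    (hstoch : ∀ j, ∑ i, M i j = 1)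
    (hirr : MatIrred Mt)
    (hA : ∀ i : Fin k, ∃ j, A i j ≠ 0)
    -- the characteristic triple `(μ, w, z)`
    (μ : ℝ) (w z : Fin n → ℝ) (hμ0 : 0 < μ) (hμ1 : μ < 1)
    (hw : ∀ i, 0 < w i) (hz : ∀ i, 0 < z i)
    (hleft : w ᵥ* Mt = μ • w) (hright : Mt *ᵥ z = μ • z)
    (hnorm1 : ∑ i, w i = 1) (hnorm2 : ∑ i, w i * z i = 1)
    -- micro-reversibility of `M`
    (hmicro : ∀ i j, w i * Mt i j * z j = w j * Mt j i * z i)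
    -- `φ` is convex on `ℝ⁺`
    (φ : ℝ → ℝ) (hφconv : ConvexOn ℝ (Set.Ici 0) φ) :
    ∃ h₀ > (0 : ℝ), ∀ h : ℝ, 0 < h → h < h₀ →
      ∀ p : Fin n ⊕ Fin k → ℝ, (∀ i, 0 ≤ p i) → (∑ i, p i = 1) →
        Gent φ w z ((1 + h • (M - 1)) *ᵥ p) ≤ Gent φ w z p := by

  refine ⟨1, one_pos, ?_⟩
  intro h h0 h1 p hp hsum
  have hμh : 0 < 1 - h * (1 - μ) := by nlinarith
  set q := (1 + h • (M - 1)) *ᵥ p with hq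
  have hMt0 : ∀ i j, 0 ≤ Mt i j := by
    intro i j
    have := hnonneg (Sum.inl i) (Sum.inl j)
    simpa [hM] using this
  have hwMt : ∀ j, ∑ i, w i * Mt i j = μ * w j := by
    intro j
    have := congrFun hleft j
    simpa [Matrix.vecMul, dotProduct] using this
  have hMtz : ∀ i, ∑ j, Mt i j * z j = μ * z i := by
    intro i
    have := congrFun hright i
    simpa [Matrix.mulVec, dotProduct] using this
  have hqi : ∀ i : Fin n, q (Sum.inl i)
      = (1 - h) * p (Sum.inl i) + h * ∑ j, Mt i j * p (Sum.inl j) := by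
    intro i
    rw [hq]
    simp only [Matrix.mulVec, dotProduct, Fintype.sum_sum_type, hM,
      Matrix.add_apply, Matrix.smul_apply, Matrix.sub_apply,
      Matrix.fromBlocks_apply₁₁, Matrix.fromBlocks_apply₁₂,
      Matrix.one_apply, Sum.inl.injEq, smul_eq_mul, Matrix.zero_apply,
      reduceCtorEq, if_false, sub_zero, mul_zero, zero_mul, zero_add,
      add_zero, Finset.sum_const_zero]
    have e : ∀ x : Fin n, ((if i = x then (1:ℝ) else 0)
          + h * (Mt i x - if i = x then 1 else 0)) * p (Sum.inl x)
        = (1 - h) * ((if i = x then (1:ℝ) else 0) * p (Sum.inl x))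
          + h * (Mt i x * p (Sum.inl x)) := fun x => by ring
    rw [Finset.sum_congr rfl fun x _ => e x, Finset.sum_add_distrib,
      ← Finset.mul_sum, ← Finset.mul_sum]
    simp
  set S : ℝ := ∑ i, w i * p (Sum.inl i) with hS
  have hqs : ∑ i, w i * q (Sum.inl i) = (1 - h * (1 - μ)) * S := by
    calc ∑ i, w i * q (Sum.inl i)
        = ∑ i, ((1 - h) * (w i * p (Sum.inl i))
            + ∑ j, h * (w i * Mt i j * p (Sum.inl j))) := by
          refine Finset.sum_congr rfl fun i _ => ?_
          rw [hqi i, mul_add]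
          congr 1
          · ring
          · simp only [Finset.mul_sum]
            exact Finset.sum_congr rfl fun j _ => by ring
      _ = (1 - h) * S + ∑ i, ∑ j, h * (w i * Mt i j * p (Sum.inl j)) := by
          rw [Finset.sum_add_distrib, ← Finset.mul_sum]
      _ = (1 - h) * S + h * (μ * S) := by
          congr 1
          rw [Finset.sum_comm]
          have e : ∀ j, ∑ i, h * (w i * Mt i j * p (Sum.inl j))
              = h * (μ * (w j * p (Sum.inl j))) := by
            intro j
            calc ∑ i, h * (w i * Mt i j * p (Sum.inl j))
                = h * ((∑ i, w i * Mt i j) * p (Sum.inl j)) := by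
                  simp only [Finset.mul_sum, Finset.sum_mul]
              _ = _ := by rw [hwMt j]; ring
          rw [Finset.sum_congr rfl fun j _ => e j, hS]
          simp only [Finset.mul_sum]
      _ = (1 - h * (1 - μ)) * S := by ring
  by_cases hS0 : S = 0
  · -- both sides are ⊤
    have hq0 : ∑ i, w i * q (Sum.inl i) = 0 := by rw [hqs, hS0, mul_zero]
    rw [Gent, Gent, if_neg (by simpa using hq0), if_neg (by simpa [hS] using hS0)]
  -- main case
  have hSpos : 0 < S := by
    rcases lt_or_eq_of_le (Finset.sum_nonneg fun i _ =>
      mul_nonneg (hw i).le (hp (Sum.inl i))) with h' | h'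
    · exact h'
    · exact absurd h'.symm hS0
  have hq0 : ∑ i, w i * q (Sum.inl i) ≠ 0 := by
    rw [hqs]; positivity
  rw [Gent, Gent, if_pos (by simpa using hq0), if_pos (by simpa [hS] using hS0)]
  rw [EReal.coe_le_coe_iff]
  -- the kernel K
  set K : Fin n → Fin n → ℝ := fun i j =>
    ((1 - h) * (if i = j then 1 else 0) + h * Mt i j) * z j / (z i * (1 - h * (1 - μ)))
    with hKdef
  set r : Fin n → ℝ := fun j => p (Sum.inl j) / (z j * S) with hrdef
  have hr0 : ∀ j, r j ∈ Set.Ici (0:ℝ) := fun j => by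
    have : 0 ≤ p (Sum.inl j) / (z j * S) :=
      div_nonneg (hp _) (mul_pos (hz j) hSpos).le
    simpa [hrdef] using this
  have hK0 : ∀ i j, 0 ≤ K i j := by
    intro i j
    have : 0 ≤ (1 - h) * (if i = j then (1:ℝ) else 0) + h * Mt i j := by
      have : (0:ℝ) ≤ (if i = j then (1:ℝ) else 0) := by positivity
      nlinarith [hMt0 i j]
    exact div_nonneg (mul_nonneg this (hz j).le) (mul_pos (hz i) hμh).le
  have hK1 : ∀ i, ∑ j, K i j = 1 := by
    intro i
    rw [hKdef]
    simp only
    rw [← Finset.sum_div]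
    rw [div_eq_one_iff_eq (mul_pos (hz i) hμh).ne']
    have e1 : ∑ j, (1 - h) * (if i = j then (1:ℝ) else 0) * z j = (1 - h) * z i := by
      simp [mul_assoc, Finset.mul_sum]
    have e2 : ∑ j, h * Mt i j * z j = h * (μ * z i) := by
      rw [← hMtz i, Finset.mul_sum]
      exact Finset.sum_congr rfl fun j _ => by ring
    calc ∑ j, ((1 - h) * (if i = j then (1:ℝ) else 0) + h * Mt i j) * z j
        = ∑ j, ((1 - h) * (if i = j then (1:ℝ) else 0) * z j + h * Mt i j * z j) := by
          refine Finset.sum_congr rfl fun j _ => by ring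
      _ = (1 - h) * z i + h * (μ * z i) := by rw [Finset.sum_add_distrib, e1, e2]
      _ = z i * (1 - h * (1 - μ)) := by ring
  have hKr : ∀ i, q (Sum.inl i) / (z i * ((1 - h * (1 - μ)) * S)) = ∑ j, K i j * r j := by
    intro i
    rw [hqi]
    have : ∀ j, K i j * r j
        = ((1 - h) * (if i = j then 1 else 0) + h * Mt i j) * p (Sum.inl j)
          / (z i * ((1 - h * (1 - μ)) * S)) := by
      intro j
      rw [hKdef, hrdef]
      have hzj := (hz j).ne'
      have hzi := (hz i).ne'
      field_simp
    rw [Finset.sum_congr rfl fun j _ => this j, ← Finset.sum_div]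
    congr 1
    symm
    have e1 : ∑ j, (1 - h) * (if i = j then (1:ℝ) else 0) * p (Sum.inl j)
        = (1 - h) * p (Sum.inl i) := by simp [mul_assoc, Finset.mul_sum]
    have e2 : ∑ j, h * Mt i j * p (Sum.inl j) = h * ∑ j, Mt i j * p (Sum.inl j) := by
      rw [Finset.mul_sum]; exact Finset.sum_congr rfl fun j _ => by ring
    calc ∑ j, ((1 - h) * (if i = j then (1:ℝ) else 0) + h * Mt i j) * p (Sum.inl j)
        = ∑ j, ((1 - h) * (if i = j then (1:ℝ) else 0) * p (Sum.inl j)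
            + h * Mt i j * p (Sum.inl j)) := by
          refine Finset.sum_congr rfl fun j _ => by ring
      _ = _ := by rw [Finset.sum_add_distrib, e1, e2]
  have hcol : ∀ j, ∑ i, w i * z i * K i j = w j * z j := by
    intro j
    have key : ∀ i, w i * z i * K i j
        = ((1 - h) * (if i = j then 1 else 0) * (w j * z j)
            + h * (w j * Mt j i * z i)) / (1 - h * (1 - μ)) := by
      intro i
      have hzi := (hz i).ne'
      by_cases hij : i = j
      · subst hij
        rw [hKdef]
        simp only [if_pos rfl]
        field_simp
      · rw [hKdef]
        simp only [if_neg hij, ← hmicro i j]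
        field_simp
        ring
    rw [Finset.sum_congr rfl fun i _ => key i, ← Finset.sum_div,
      Finset.sum_add_distrib]
    have e1 : ∑ i, (1 - h) * (if i = j then (1:ℝ) else 0) * (w j * z j)
        = (1 - h) * (w j * z j) := by
      rw [Finset.sum_congr rfl fun i _ =>
        (by ring : (1 - h) * (if i = j then (1:ℝ) else 0) * (w j * z j)
          = (if i = j then (1:ℝ) else 0) * ((1 - h) * (w j * z j)))]
      simp
    have e2 : ∑ i, h * (w j * Mt j i * z i) = h * (w j * (μ * z j)) := by
      rw [← hMtz j]
      simp only [Finset.mul_sum]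
      all_goals exact Finset.sum_congr rfl fun i _ => by ring
    rw [e1, e2]
    field_simp
    ring
  -- now the chain of inequalities
  calc ∑ i, φ (q (Sum.inl i) / (z i * ∑ j, w j * q (Sum.inl j))) * (w i * z i)
      = ∑ i, φ (∑ j, K i j * r j) * (w i * z i) := by
        refine Finset.sum_congr rfl fun i _ => ?_
        rw [show (∑ j, w j * q (Sum.inl j)) = (1 - h * (1 - μ)) * S from hqs, hKr]
    _ ≤ ∑ i, (∑ j, K i j * φ (r j)) * (w i * z i) := by
        refine Finset.sum_le_sum fun i _ => ?_
        refine mul_le_mul_of_nonneg_right ?_ (mul_pos (hw i) (hz i)).le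
        have := hφconv.map_sum_le (t := Finset.univ) (fun j _ => hK0 i j)
          (hK1 i) (fun j _ => hr0 j)
        simpa [smul_eq_mul] using this
    _ = ∑ j, (∑ i, w i * z i * K i j) * φ (r j) := by
        calc ∑ i, (∑ j, K i j * φ (r j)) * (w i * z i)
            = ∑ i, ∑ j, w i * z i * K i j * φ (r j) := by
              refine Finset.sum_congr rfl fun i _ => ?_
              rw [Finset.sum_mul]
              exact Finset.sum_congr rfl fun j _ => by ring
          _ = ∑ j, ∑ i, w i * z i * K i j * φ (r j) := Finset.sum_comm
          _ = _ := by
              refine Finset.sum_congr rfl fun j _ => ?_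
              rw [Finset.sum_mul]
    _ = ∑ j, φ (r j) * (w j * z j) := by
        refine Finset.sum_congr rfl fun j _ => ?_
        rw [hcol]; ring
    _ = ∑ i, φ (p (Sum.inl i) / (z i * S)) * (w i * z i) := by
        refine Finset.sum_congr rfl fun j _ => by rw [hrdef]
    _ = _ := by first | rfl | rw [hS]
end

section
/- Among C¹ curves ξ : [0,1] → (0,1) with ξ(0) = x and ξ(1) = y, the infimum of the action ∫_0^1 |ξ'(t)|²/θ(ξ(t)) dt equals (∫_x^y du/√θ(u))², and it is attained by a unique constant-intrinsic-speed geodesic. -/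
/-!
Write `v = ξ' / √(θ ∘ ξ)` for the intrinsic velocity of a curve and `L = ∫_x^y du / √θ(u)`.
The substitution `u = ξ(t)` gives `∫₀¹ v = L`, while the action is `∫₀¹ v²`, so the action is at
least `L²`, with equality exactly for `v ≡ L`. That curve solves `G(ξ(t)) = L t` for
`G(w) = ∫_x^w du / √θ(u)`; extending the density by constants beyond `[[x, y]]` makes `G` a
diffeomorphism of `ℝ`, which yields a global `C¹` solution. A constant-speed competitor has
`v² = L²` and `∫₀¹ v = L`, so `v ≡ L` by connectedness of `[0, 1]`; hence it also solves
`G(ξ(t)) = L t`, and `G` is strictly increasing on `(0, 1)`.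
-/

open Set

/-- A `C¹` curve in `(0,1)` joining `x` to `y` in unit time. -/
def AdmCurve (x y : ℝ) (ξ : ℝ → ℝ) : Prop :=
  ContDiff ℝ 1 ξ ∧ (∀ t ∈ Icc (0 : ℝ) 1, ξ t ∈ Ioo (0 : ℝ) 1) ∧ ξ 0 = x ∧ ξ 1 = y

/-- The Shahshahani action of a curve. -/
noncomputable def curveAction (θ : ℝ → ℝ) (ξ : ℝ → ℝ) : ℝ :=
  ∫ t in (0 : ℝ)..1, (deriv ξ t) ^ 2 / θ (ξ t)

open Filter MeasureTheory

lemma sq_integral_le_integral_sq {f : ℝ → ℝ} (hf : IntervalIntegrable f volume 0 1)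
    (hf2 : IntervalIntegrable (fun t => f t ^ 2) volume 0 1) :
    (∫ t in (0 : ℝ)..1, f t) ^ 2 ≤ ∫ t in (0 : ℝ)..1, f t ^ 2 := by
  set I := ∫ t in (0 : ℝ)..1, f t
  have hexpand : ∫ t in (0 : ℝ)..1, (f t - I) ^ 2 = (∫ t in (0 : ℝ)..1, f t ^ 2) - I ^ 2 := by
    have hsq : ∀ t, (f t - I) ^ 2 = f t ^ 2 - 2 * I * f t + I ^ 2 := fun t => by ring
    simp_rw [hsq]
    rw [intervalIntegral.integral_add (hf2.sub (hf.const_mul _)) intervalIntegrable_const,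
      intervalIntegral.integral_sub hf2 (hf.const_mul _), intervalIntegral.integral_const_mul]
    simp only [intervalIntegral.integral_const, sub_zero, smul_eq_mul, one_mul]
    ring
  linarith [intervalIntegral.integral_nonneg (μ := volume) zero_le_one
    fun t _ => sq_nonneg (f t - I)]

lemma eqOn_const_of_sq_eq_of_integral_eq {f : ℝ → ℝ} {c : ℝ} (hf : ContinuousOn f (Icc 0 1))
    (hsq : ∀ t ∈ Icc (0 : ℝ) 1, f t ^ 2 = c ^ 2) (hint : ∫ t in (0 : ℝ)..1, f t = c) :
    EqOn f (fun _ => c) (Icc 0 1) := by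
  rcases eq_or_ne c 0 with rfl | hc
  · intro t ht
    simpa using hsq t ht
  refine (isPreconnected_Icc.eq_or_eq_neg_of_sq_eq hf continuousOn_const (fun t ht => hsq t ht)
    fun _ => hc).resolve_right fun hneg => hc ?_
  have : ∫ t in (0 : ℝ)..1, f t = -c := by
    rw [intervalIntegral.integral_congr (g := fun _ => -c) (by rwa [uIcc_of_le zero_le_one])]
    simp
  linarith

lemma surjective_of_le_hasDerivAt {F g : ℝ → ℝ} {m : ℝ} (hm : 0 < m)
    (hF : ∀ v, HasDerivAt F (g v) v) (hg : ∀ v, m ≤ g v) : Function.Surjective F := by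
  have hdiff : Differentiable ℝ F := fun v => (hF v).differentiableAt
  have hgrowth := mul_sub_le_image_sub_of_le_deriv hdiff fun v => (hF v).deriv ▸ hg v
  have hlin : Tendsto (fun v => F 0 + m * v) atTop atTop :=
    tendsto_atTop_add_const_left _ _ (tendsto_id.const_mul_atTop hm)
  have hlin' : Tendsto (fun v => F 0 + m * v) atBot atBot :=
    tendsto_atBot_add_const_left _ _ (tendsto_id.const_mul_atBot hm)
  refine hdiff.continuous.surjective ?_ ?_
  · refine tendsto_atTop_mono' _ ((eventually_ge_atTop 0).mono fun v hv => ?_) hlin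
    linarith [hgrowth hv]
  · refine tendsto_atBot_mono' _ ((eventually_le_atBot 0).mono fun v hv => ?_) hlin'
    linarith [hgrowth hv]

lemma exists_orderIso_hasDerivAt_symm {F g : ℝ → ℝ} {m : ℝ} (hm : 0 < m)
    (hF : ∀ v, HasDerivAt F (g v) v) (hg : ∀ v, m ≤ g v) :
    ∃ E : ℝ ≃o ℝ, ⇑E = F ∧ ∀ w, HasDerivAt E.symm (g (E.symm w))⁻¹ w := by
  have hpos : ∀ v, 0 < g v := fun v => hm.trans_le (hg v)
  let E := (strictMono_of_hasDerivAt_pos hF hpos).orderIsoOfSurjective F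
    (surjective_of_le_hasDerivAt hm hF hg)
  exact ⟨E, rfl, fun w => (hF _).of_local_left_inverse E.symm.continuous.continuousAt
    (hpos _).ne' (Eventually.of_forall E.apply_symm_apply)⟩

lemma exists_contDiff_deriv_mul_eq_integral {ρ : ℝ → ℝ} {a b : ℝ}
    (hρ : ContinuousOn ρ (uIcc a b)) (hρpos : ∀ u ∈ uIcc a b, 0 < ρ u) :
    ∃ γ : ℝ → ℝ, ContDiff ℝ 1 γ ∧ γ 0 = a ∧ γ 1 = b ∧
      ∀ t ∈ Icc (0 : ℝ) 1, γ t ∈ uIcc a b ∧ deriv γ t * ρ (γ t) = ∫ u in a..b, ρ u := by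
  set L := ∫ u in a..b, ρ u
  set π : ℝ → ℝ := fun u => projIcc (a ⊓ b) (a ⊔ b) inf_le_sup u
  have hπ : ∀ u, π u ∈ uIcc a b := fun u => (projIcc _ _ _ u).2
  have hπ_eq : ∀ u ∈ uIcc a b, π u = u := fun u hu => by simp [π, projIcc_of_mem _ hu]
  have hρπ : Continuous (ρ ∘ π) :=
    hρ.comp_continuous (continuous_subtype_val.comp continuous_projIcc) hπ
  obtain ⟨c, hc, hmin⟩ := isCompact_uIcc.exists_isMinOn nonempty_uIcc hρ
  set F : ℝ → ℝ := fun v => ∫ u in a..v, ρ (π u)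
  have hF : ∀ v, HasDerivAt F (ρ (π v)) v := fun v =>
    (hρπ.integral_hasStrictDerivAt a v).hasDerivAt
  obtain ⟨E, hE, hE_symm⟩ :=
    exists_orderIso_hasDerivAt_symm (hρpos c hc) hF fun u => hmin (hπ u)
  have hEa : E.symm 0 = a := E.symm_apply_eq.2 (by simp [hE, F])
  have hEb : E.symm L = b := E.symm_apply_eq.2 <| by
    rw [hE]
    exact (intervalIntegral.integral_congr fun u hu => congrArg ρ (hπ_eq u hu)).symm
  set γ : ℝ → ℝ := fun t => E.symm (L * t)
  have hγ : ∀ t, HasDerivAt γ ((ρ (π (γ t)))⁻¹ * L) t := fun t => by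
    have hlin : HasDerivAt (fun t => L * t) L t := by simpa using (hasDerivAt_id t).const_mul L
    exact (hE_symm (L * t)).comp t hlin
  have hγ_mem : ∀ t ∈ Icc (0 : ℝ) 1, γ t ∈ uIcc a b := fun t ht => by
    have hLt : L * t ∈ uIcc 0 L := by
      rcases le_total 0 L with hL | hL
      · exact mem_uIcc.2 (Or.inl ⟨by nlinarith [ht.1], by nlinarith [ht.2]⟩)
      · exact mem_uIcc.2 (Or.inr ⟨by nlinarith [ht.2], by nlinarith [ht.1]⟩)
    simpa only [hEa, hEb] using E.symm.monotone.mapsTo_uIcc hLt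
  refine ⟨γ, ?_, by simp [γ, hEa], by simp [γ, hEb], fun t ht => ⟨hγ_mem t ht, ?_⟩⟩
  · have hγ_cont : Continuous γ := continuous_iff_continuousAt.2 fun t => (hγ t).continuousAt
    refine contDiff_one_iff_deriv.2 ⟨fun t => (hγ t).differentiableAt, ?_⟩
    rw [funext fun t => (hγ t).deriv]
    exact ((hρπ.comp hγ_cont).inv₀ fun t => (hρpos _ (hπ _)).ne').mul continuous_const
  · rw [(hγ t).deriv, hπ_eq _ (hγ_mem t ht), inv_mul_eq_div, div_mul_cancel₀]
    exact (hρpos _ (hγ_mem t ht)).ne'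

lemma continuousOn_one_div_sqrt {θ : ℝ → ℝ} {s : Set ℝ} (hθ : ContinuousOn θ s)
    (hθpos : ∀ u ∈ s, 0 < θ u) : ContinuousOn (fun u => 1 / √(θ u)) s :=
  continuousOn_const.div hθ.sqrt fun u hu => (Real.sqrt_pos.2 (hθpos u hu)).ne'

section Curves

variable {θ : ℝ → ℝ} {x y : ℝ} {ξ : ℝ → ℝ}

lemma AdmCurve.continuousOn_velocity (hθ : ContinuousOn θ (Ioo 0 1))
    (hθpos : ∀ u ∈ Ioo (0 : ℝ) 1, 0 < θ u) (hξ : AdmCurve x y ξ) :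
    ContinuousOn (fun t => deriv ξ t / √(θ (ξ t))) (Icc 0 1) :=
  (hξ.1.continuous_deriv le_rfl).continuousOn.div
    (hθ.comp hξ.1.continuous.continuousOn hξ.2.1).sqrt
    fun t ht => (Real.sqrt_pos.2 (hθpos _ (hξ.2.1 t ht))).ne'

lemma AdmCurve.velocity_sq (hθpos : ∀ u ∈ Ioo (0 : ℝ) 1, 0 < θ u) (hξ : AdmCurve x y ξ)
    {t : ℝ} (ht : t ∈ Icc (0 : ℝ) 1) :
    (deriv ξ t / √(θ (ξ t))) ^ 2 = deriv ξ t ^ 2 / θ (ξ t) := by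
  rw [div_pow, Real.sq_sqrt (hθpos _ (hξ.2.1 t ht)).le]

lemma AdmCurve.integral_velocity (hθ : ContinuousOn θ (Ioo 0 1))
    (hθpos : ∀ u ∈ Ioo (0 : ℝ) 1, 0 < θ u) (hξ : AdmCurve x y ξ)
    {t : ℝ} (ht : t ∈ Icc (0 : ℝ) 1) :
    ∫ s in (0 : ℝ)..t, deriv ξ s / √(θ (ξ s)) = ∫ u in x..ξ t, 1 / √(θ u) := by
  obtain ⟨hC1, hmem, hξ0, -⟩ := hξ
  have hsub : uIcc 0 t ⊆ Icc 0 1 := uIcc_subset_Icc (left_mem_Icc.2 zero_le_one) ht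
  rw [← hξ0, ← intervalIntegral.integral_comp_mul_deriv'
    (fun s _ => (hC1.differentiable one_ne_zero s).hasDerivAt)
    (hC1.continuous_deriv le_rfl).continuousOn
    ((continuousOn_one_div_sqrt hθ hθpos).mono (image_subset_iff.2 fun s hs => hmem s (hsub hs)))]
  simp only [Function.comp_apply, one_div_mul_eq_div]

lemma AdmCurve.sq_integral_le_curveAction (hθ : ContinuousOn θ (Ioo 0 1))
    (hθpos : ∀ u ∈ Ioo (0 : ℝ) 1, 0 < θ u) (hξ : AdmCurve x y ξ) :
    (∫ u in x..y, 1 / √(θ u)) ^ 2 ≤ curveAction θ ξ := by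
  have hv := hξ.continuousOn_velocity hθ hθpos
  rw [← hξ.2.2.2, ← hξ.integral_velocity hθ hθpos ⟨zero_le_one, le_rfl⟩, curveAction]
  convert sq_integral_le_integral_sq (hv.intervalIntegrable_of_Icc zero_le_one)
    ((hv.pow 2).intervalIntegrable_of_Icc zero_le_one) using 1
  refine intervalIntegral.integral_congr fun t ht => (hξ.velocity_sq hθpos ?_).symm
  rwa [uIcc_of_le zero_le_one] at ht

lemma AdmCurve.integral_one_div_sqrt_eq_mul_of_speed (hθ : ContinuousOn θ (Ioo 0 1))
    (hθpos : ∀ u ∈ Ioo (0 : ℝ) 1, 0 < θ u) (hξ : AdmCurve x y ξ)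
    (hspeed : ∀ t ∈ Icc (0 : ℝ) 1,
      deriv ξ t ^ 2 / θ (ξ t) = (∫ u in x..y, 1 / √(θ u)) ^ 2)
    {t : ℝ} (ht : t ∈ Icc (0 : ℝ) 1) :
    ∫ u in x..ξ t, 1 / √(θ u) = (∫ u in x..y, 1 / √(θ u)) * t := by
  have hconst := eqOn_const_of_sq_eq_of_integral_eq (hξ.continuousOn_velocity hθ hθpos)
    (fun s hs => (hξ.velocity_sq hθpos hs).trans (hspeed s hs))
    (hξ.2.2.2 ▸ hξ.integral_velocity hθ hθpos ⟨zero_le_one, le_rfl⟩)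
  have hsub : uIcc 0 t ⊆ Icc 0 1 := uIcc_subset_Icc (left_mem_Icc.2 zero_le_one) ht
  rw [← hξ.integral_velocity hθ hθpos ht, intervalIntegral.integral_congr (hconst.mono hsub)]
  simp [mul_comm]

lemma strictMonoOn_integral_one_div_sqrt (hθ : ContinuousOn θ (Ioo 0 1))
    (hθpos : ∀ u ∈ Ioo (0 : ℝ) 1, 0 < θ u) (hx : x ∈ Ioo (0 : ℝ) 1) :
    StrictMonoOn (fun v => ∫ u in x..v, 1 / √(θ u)) (Ioo 0 1) := by
  have hint : ∀ a ∈ Ioo (0 : ℝ) 1, ∀ b ∈ Ioo (0 : ℝ) 1,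
      IntervalIntegrable (fun u => 1 / √(θ u)) volume a b := fun a ha b hb =>
    ((continuousOn_one_div_sqrt hθ hθpos).mono
      (ordConnected_Ioo.uIcc_subset ha hb)).intervalIntegrable
  intro a ha b hb hab
  have hpos : 0 < ∫ u in a..b, 1 / √(θ u) :=
    intervalIntegral.intervalIntegral_pos_of_pos_on (hint a ha b hb)
      (fun u hu => one_div_pos.2 (Real.sqrt_pos.2 (hθpos u ⟨ha.1.trans hu.1, hu.2.trans hb.2⟩)))
      hab
  have := intervalIntegral.integral_interval_sub_left (hint x hx b hb) (hint x hx a ha)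
  dsimp only
  linarith

lemma exists_admCurve_speed_eq (hθ : ContinuousOn θ (Ioo 0 1))
    (hθpos : ∀ u ∈ Ioo (0 : ℝ) 1, 0 < θ u) (hx : x ∈ Ioo (0 : ℝ) 1) (hy : y ∈ Ioo (0 : ℝ) 1) :
    ∃ ξ, AdmCurve x y ξ ∧
      ∀ t ∈ Icc (0 : ℝ) 1, deriv ξ t ^ 2 / θ (ξ t) = (∫ u in x..y, 1 / √(θ u)) ^ 2 := by
  have hxy : uIcc x y ⊆ Ioo 0 1 := ordConnected_Ioo.uIcc_subset hx hy
  obtain ⟨ξ, hC1, hξ0, hξ1, hξ⟩ := exists_contDiff_deriv_mul_eq_integral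
    ((continuousOn_one_div_sqrt hθ hθpos).mono hxy)
    fun u hu => one_div_pos.2 (Real.sqrt_pos.2 (hθpos u (hxy hu)))
  refine ⟨ξ, ⟨hC1, fun t ht => hxy (hξ t ht).1, hξ0, hξ1⟩, fun t ht => ?_⟩
  rw [← (hξ t ht).2, mul_one_div, div_pow, Real.sq_sqrt (hθpos _ (hxy (hξ t ht).1)).le]

lemma curveAction_eq_of_speed {c : ℝ}
    (h : ∀ t ∈ Icc (0 : ℝ) 1, deriv ξ t ^ 2 / θ (ξ t) = c) : curveAction θ ξ = c := by
  rw [curveAction, intervalIntegral.integral_congr (g := fun _ => c)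
    fun t ht => h t (by rwa [uIcc_of_le zero_le_one] at ht)]
  simp

end Curves

theorem stmt15 (θ : ℝ → ℝ)
    (hθcont : ContinuousOn θ (Icc (0 : ℝ) 1))
    (hθpos : ∀ u ∈ Ioo (0 : ℝ) 1, 0 < θ u)
    (x y : ℝ) (hx : x ∈ Ioo (0 : ℝ) 1) (hy : y ∈ Ioo (0 : ℝ) 1) :
    -- the infimum of the action equals `(∫_x^y du/√θ(u))²` ...
    sInf {a : ℝ | ∃ ξ, AdmCurve x y ξ ∧ curveAction θ ξ = a} =
      (∫ u in x..y, 1 / Real.sqrt (θ u)) ^ 2 ∧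
    -- ... and it is attained by a constant-intrinsic-speed geodesic, unique
    -- among constant-speed minimisers
    ∃ ξ, AdmCurve x y ξ ∧
      curveAction θ ξ = (∫ u in x..y, 1 / Real.sqrt (θ u)) ^ 2 ∧
      (∀ t ∈ Icc (0 : ℝ) 1,
        (deriv ξ t) ^ 2 / θ (ξ t) = (∫ u in x..y, 1 / Real.sqrt (θ u)) ^ 2) ∧
      ∀ ξ', AdmCurve x y ξ' →
        curveAction θ ξ' = (∫ u in x..y, 1 / Real.sqrt (θ u)) ^ 2 →
        (∀ t ∈ Icc (0 : ℝ) 1,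
          (deriv ξ' t) ^ 2 / θ (ξ' t) = (∫ u in x..y, 1 / Real.sqrt (θ u)) ^ 2) →
        Set.EqOn ξ' ξ (Icc (0 : ℝ) 1) := by
  have hθ : ContinuousOn θ (Ioo 0 1) := hθcont.mono Ioo_subset_Icc_self
  obtain ⟨ξ, hξ, hspeed⟩ := exists_admCurve_speed_eq hθ hθpos hx hy
  have hact := curveAction_eq_of_speed hspeed
  refine ⟨IsLeast.csInf_eq ⟨⟨ξ, hξ, hact⟩, ?_⟩, ξ, hξ, hact, hspeed, ?_⟩
  · rintro _ ⟨ξ', hξ', rfl⟩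
    exact hξ'.sq_integral_le_curveAction hθ hθpos
  · intro ξ' hξ' _ hspeed' t ht
    exact (strictMonoOn_integral_one_div_sqrt hθ hθpos hx).injOn (hξ'.2.1 t ht) (hξ.2.1 t ht)
      ((hξ'.integral_one_div_sqrt_eq_mul_of_speed hθ hθpos hspeed' ht).trans
        (hξ.integral_one_div_sqrt_eq_mul_of_speed hθ hθpos hspeed ht).symm)
end
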